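/- There exists a constant C > 0 with the following property: for every analytic polynomial f(z) = Σ_{k≥0} a_k z^k of one variable, every positive integer n, and every complex number ζ with |ζ| = 1, one has Σ_{j=1}^n | Σ_{k=0}^{j−1} a_k ζ^k |² ≤ C · n · (sup{ |f(z)| : |z| = 1 })². -/

import Mathlib

/-! With `g(z) = f(ζ z)` and `D(z) = 1 + z + ⋯ + z^(n-1)`, the coefficient of `z^(j-1)` in `g D`
is the `(j-1)`-st partial sum of `f` at `ζ` for `1 ≤ j ≤ n`. By Parseval's identity on the unit
circle the left-hand side is at most the mean of `|g D|² ≤ ‖f‖∞² |D|²`, and the mean of `|D|²`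
is `n`; so `C = 1` works. -/

/-- `f(z) = Σ_{k ≤ d} a_k z^k`. -/
noncomputable def polyEval1 (d : ℕ) (a : ℕ → ℂ) (z : ℂ) : ℂ :=
  ∑ k ∈ Finset.range (d + 1), a k * z ^ k

/-- `sup { |f(z)| : |z| = 1 }`. -/
noncomputable def supNormT1 (d : ℕ) (a : ℕ → ℂ) : ℝ :=
  sSup {x : ℝ | ∃ z : ℂ, ‖z‖ = 1 ∧ x = ‖polyEval1 d a z‖}

open Finset Polynomial Real

namespace Polynomial

theorem coeff_geom_sum_X_pow {R : Type*} [Semiring R] (n i : ℕ) :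
    (∑ m ∈ range n, X ^ m : R[X]).coeff i = if i < n then 1 else 0 := by
  simp only [finsetSum_coeff, coeff_X_pow, sum_ite_eq, mem_range]

theorem coeff_mul_geom_sum_X_pow {R : Type*} [Semiring R] (p : R[X]) {j n : ℕ} (hj : j < n) :
    (p * ∑ m ∈ range n, X ^ m).coeff j = ∑ i ∈ range (j + 1), p.coeff i := by
  rw [coeff_mul, Nat.sum_antidiagonal_eq_sum_range_succ_mk]
  refine sum_congr rfl fun i _ => ?_
  rw [coeff_geom_sum_X_pow, if_pos (by omega), mul_one]

theorem sum_range_sq_norm_coeff_le_circleAverage (p : ℂ[X]) (n : ℕ) :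
    ∑ j ∈ range n, ‖p.coeff j‖ ^ 2 ≤ circleAverage (fun z ↦ ‖p.eval z‖ ^ 2) 0 1 := by
  rw [← sum_sq_norm_coeff_eq_circleAverage]
  calc ∑ j ∈ range n, ‖p.coeff j‖ ^ 2
      ≤ ∑ j ∈ range n ∪ p.support, ‖p.coeff j‖ ^ 2 :=
        sum_le_sum_of_subset_of_nonneg subset_union_left fun _ _ _ => by positivity
    _ = ∑ j ∈ p.support, ‖p.coeff j‖ ^ 2 :=
        (sum_subset subset_union_right fun i _ hi => by simp [notMem_support_iff.mp hi]).symm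

theorem circleAverage_sq_norm_eval_geom_sum (n : ℕ) :
    circleAverage (fun z ↦ ‖(∑ m ∈ range n, X ^ m : ℂ[X]).eval z‖ ^ 2) 0 1 = n := by
  rw [← sum_sq_norm_coeff_eq_circleAverage]
  have hsupp : (∑ m ∈ range n, X ^ m : ℂ[X]).support ⊆ range n := fun i hi => by
    rw [mem_support_iff, coeff_geom_sum_X_pow] at hi
    exact mem_range.mpr (by_contra fun h => hi (if_neg h))
  rw [sum_subset hsupp fun i _ hi => by simp [notMem_support_iff.mp hi]]
  simp +contextual

theorem circleAverage_sq_norm_eval_mul_le (p q : ℂ[X]) {M : ℝ}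
    (hp : ∀ z ∈ Metric.sphere (0 : ℂ) 1, ‖p.eval z‖ ≤ M) :
    circleAverage (fun z ↦ ‖(p * q).eval z‖ ^ 2) 0 1 ≤
      M ^ 2 * circleAverage (fun z ↦ ‖q.eval z‖ ^ 2) 0 1 := by
  rw [← smul_eq_mul (M ^ 2), ← circleAverage_fun_smul]
  refine circleAverage_mono ?_ ?_ fun z hz => ?_
  · exact (by fun_prop : Continuous fun z ↦ ‖(p * q).eval z‖ ^ 2).continuousOn.circleIntegrable'
  · exact (by fun_prop : Continuous fun z ↦ M ^ 2 • ‖q.eval z‖ ^ 2).continuousOn.circleIntegrable'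
  rw [abs_one] at hz
  rw [eval_mul, norm_mul, mul_pow, smul_eq_mul]
  gcongr
  exact hp z hz

end Polynomial

noncomputable def polyOfCoeff (d : ℕ) (a : ℕ → ℂ) : ℂ[X] :=
  ∑ k ∈ range (d + 1), C (a k) * X ^ k

theorem eval_polyOfCoeff (d : ℕ) (a : ℕ → ℂ) (z : ℂ) :
    (polyOfCoeff d a).eval z = polyEval1 d a z := by
  simp [polyOfCoeff, polyEval1, eval_finsetSum]

theorem coeff_polyOfCoeff {d : ℕ} {a : ℕ → ℂ} (ha : ∀ k, d < k → a k = 0) (k : ℕ) :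
    (polyOfCoeff d a).coeff k = a k := by
  simp only [polyOfCoeff, finsetSum_coeff, coeff_C_mul_X_pow, sum_ite_eq, mem_range]
  split_ifs with hk
  · rfl
  · exact (ha k (by omega)).symm

theorem norm_polyEval1_le_supNormT1 (d : ℕ) (a : ℕ → ℂ) {z : ℂ} (hz : ‖z‖ = 1) :
    ‖polyEval1 d a z‖ ≤ supNormT1 d a := by
  refine le_csSup ?_ ⟨z, hz, rfl⟩
  have hcont : Continuous fun w ↦ ‖polyEval1 d a w‖ := by
    unfold polyEval1; fun_prop
  refine ((isCompact_sphere (0 : ℂ) 1).image hcont).bddAbove.mono ?_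
  rintro _ ⟨w, hw, rfl⟩
  exact ⟨w, by simpa using hw, rfl⟩

/-- There is a constant `C > 0` such that for every analytic polynomial
`f(z) = Σ a_k z^k` of one variable, every positive integer `n`, and every `ζ` with
`|ζ| = 1`, one has `Σ_{j=1}^n |Σ_{k=0}^{j−1} a_k ζ^k|² ≤ C n ‖f‖²_{H∞}`. -/
theorem partial_sums_square_sum_estimate :
    ∃ C : ℝ, 0 < C ∧
      ∀ (d : ℕ) (a : ℕ → ℂ), (∀ k : ℕ, d < k → a k = 0) →
        ∀ n : ℕ, 0 < n → ∀ ζ : ℂ, ‖ζ‖ = 1 →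
          ∑ j ∈ Finset.Icc 1 n,
              ‖∑ k ∈ Finset.range j, a k * ζ ^ k‖ ^ 2 ≤
            C * n * (supNormT1 d a) ^ 2 := by
  refine ⟨1, one_pos, fun d a ha n _ ζ hζ => ?_⟩
  set p := (polyOfCoeff d a).comp (C ζ * X)
  have hp : ∀ z ∈ Metric.sphere (0 : ℂ) 1, ‖p.eval z‖ ≤ supNormT1 d a := fun z hz => by
    rw [eval_comp, eval_polyOfCoeff]
    exact norm_polyEval1_le_supNormT1 d a (by simpa [hζ] using hz)
  set D : ℂ[X] := ∑ m ∈ range n, X ^ m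
  have hreindex : ∀ g : ℕ → ℝ, ∑ j ∈ Icc 1 n, g j = ∑ j ∈ range n, g (j + 1) := fun g => by
    rw [range_eq_Ico, sum_Ico_add', zero_add, Ico_add_one_right_eq_Icc]
  calc ∑ j ∈ Icc 1 n, ‖∑ k ∈ range j, a k * ζ ^ k‖ ^ 2
      = ∑ j ∈ range n, ‖(p * D).coeff j‖ ^ 2 := by
        rw [hreindex]
        refine sum_congr rfl fun j hj => ?_
        rw [coeff_mul_geom_sum_X_pow _ (mem_range.mp hj)]
        simp only [p, comp_C_mul_X_coeff, coeff_polyOfCoeff ha]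
    _ ≤ circleAverage (fun z ↦ ‖(p * D).eval z‖ ^ 2) 0 1 :=
        sum_range_sq_norm_coeff_le_circleAverage _ n
    _ ≤ supNormT1 d a ^ 2 * circleAverage (fun z ↦ ‖D.eval z‖ ^ 2) 0 1 :=
        circleAverage_sq_norm_eval_mul_le _ _ hp
    _ = 1 * n * supNormT1 d a ^ 2 := by
        rw [circleAverage_sq_norm_eval_geom_sum]; ring
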